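/- arXiv:2407.06575 — 4 statements merged into one kernel-verified Lean document; each statement's English description precedes it below -/
import Mathlib

section
/- Let p ≥ 1 and let f ∈ L^p_loc(ℝⁿ; ℝ^m) satisfy the Morrey-type condition with constants (L, p, δ, r₀). Let η : ℝⁿ → [0,∞) be integrable with ∫_{ℝⁿ} η = 1. Then for every ε > 0 the mollification f ∗ η_ε satisfies the same Morrey-type condition with the same constants: for every x₀ ∈ ℝⁿ and every 0 < r < r₀, ∫_{B(x₀,r)} |f ∗ η_ε|^p dx ≤ L r^{n−p+δ}. -/
open MeasureTheory Metric ENNReal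

/-!
Since `η_ε` is a probability density, Jensen's inequality gives pointwise
`|f ∗ η_ε|^p ≤ |f|^p ∗ η_ε`. Integrating over `B(x₀, r)` and exchanging the integrals (Tonelli)
turns the right-hand side into an `η_ε`-average over `y` of `∫_{B(x₀ - y, r)} |f|^p`,
each of which is bounded by `L r^(n - p + δ)`.
-/

section Jensen

variable {α : Type*} [MeasurableSpace α] {μ : Measure α} {p : ℝ}

theorem rpow_lintegral_le_lintegral_rpow [IsProbabilityMeasure μ] (hp : 1 ≤ p) {g : α → ℝ≥0∞}
    (hg : AEMeasurable g μ) : (∫⁻ a, g a ∂μ) ^ p ≤ ∫⁻ a, g a ^ p ∂μ := by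
  have hp0 : 0 < p := zero_lt_one.trans_le hp
  have h := eLpNorm'_le_eLpNorm'_of_exponent_le zero_lt_one hp μ hg.aestronglyMeasurable
  simp only [eLpNorm', enorm_eq_self, rpow_one, div_one] at h
  calc (∫⁻ a, g a ∂μ) ^ p ≤ ((∫⁻ a, g a ^ p ∂μ) ^ (1 / p)) ^ p := rpow_le_rpow h hp0.le
    _ = ∫⁻ a, g a ^ p ∂μ := by rw [← rpow_mul, one_div_mul_cancel hp0.ne', rpow_one]

theorem rpow_lintegral_mul_le_lintegral_mul_rpow (hp : 1 ≤ p) {w g : α → ℝ≥0∞}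
    (hw : AEMeasurable w μ) (hg : AEMeasurable g μ) (hw1 : ∫⁻ a, w a ∂μ = 1) :
    (∫⁻ a, w a * g a ∂μ) ^ p ≤ ∫⁻ a, w a * g a ^ p ∂μ := by
  have : IsProbabilityMeasure (μ.withDensity w) :=
    ⟨by rwa [withDensity_apply _ .univ, Measure.restrict_univ]⟩
  have hg' : AEMeasurable g (μ.withDensity w) := hg.mono_ac (withDensity_absolutelyContinuous μ w)
  simpa only [lintegral_withDensity_eq_lintegral_mul₀ hw hg,
    lintegral_withDensity_eq_lintegral_mul₀ hw (hg.pow_const p), Pi.mul_apply]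
    using rpow_lintegral_le_lintegral_rpow hp hg'

theorem enorm_integral_smul_rpow_le {E : Type*} [NormedAddCommGroup E] [NormedSpace ℝ E]
    (hp : 1 ≤ p) {w : α → ℝ} {g : α → E} (hw : AEMeasurable w μ) (hw0 : ∀ a, 0 ≤ w a)
    (hw1 : ∫⁻ a, ENNReal.ofReal (w a) ∂μ = 1) (hg : AEStronglyMeasurable g μ) :
    ‖∫ a, w a • g a ∂μ‖ₑ ^ p ≤ ∫⁻ a, ENNReal.ofReal (w a) * ‖g a‖ₑ ^ p ∂μ := by
  calc ‖∫ a, w a • g a ∂μ‖ₑ ^ p ≤ (∫⁻ a, ENNReal.ofReal (w a) * ‖g a‖ₑ ∂μ) ^ p := by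
        gcongr
        refine (enorm_integral_le_lintegral_enorm _).trans_eq (lintegral_congr fun a => ?_)
        rw [enorm_smul, Real.enorm_of_nonneg (hw0 a)]
    _ ≤ _ := rpow_lintegral_mul_le_lintegral_mul_rpow hp hw.ennreal_ofReal hg.enorm hw1

end Jensen

section Convolution

variable {G : Type*} [MeasurableSpace G] [AddGroup G] [MeasurableAdd₂ G] [MeasurableNeg G]
  {μ : Measure G} [SFinite μ] [μ.IsAddRightInvariant]

theorem setLIntegral_lintegral_mul_comp_sub_le {w g : G → ℝ≥0∞} (hw : AEMeasurable w μ)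
    (hg : AEMeasurable g μ) (hw1 : ∫⁻ y, w y ∂μ = 1) {s : Set G} {C : ℝ≥0∞}
    (hC : ∀ y, ∫⁻ x in s, g (x - y) ∂μ ≤ C) :
    ∫⁻ x in s, ∫⁻ y, w y * g (x - y) ∂μ ∂μ ≤ C := by
  have hsub : Measure.QuasiMeasurePreserving (fun z : G × G => z.1 - z.2) (μ.prod μ) μ :=
    Measure.quasiMeasurePreserving_fst.comp
      (measurePreserving_sub_prod μ μ).quasiMeasurePreserving
  have hF : AEMeasurable (Function.uncurry fun x y => w y * g (x - y)) ((μ.restrict s).prod μ) :=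
    ((hw.comp_quasiMeasurePreserving Measure.quasiMeasurePreserving_snd).mul
      (hg.comp_quasiMeasurePreserving hsub)).mono_ac
      ((Measure.absolutelyContinuous_of_le Measure.restrict_le_self).prod .rfl)
  calc ∫⁻ x in s, ∫⁻ y, w y * g (x - y) ∂μ ∂μ = ∫⁻ y, w y * ∫⁻ x in s, g (x - y) ∂μ ∂μ := by
        rw [lintegral_lintegral_swap hF]
        refine lintegral_congr fun y => lintegral_const_mul'' _ ?_
        exact (hg.comp_quasiMeasurePreserving
          (measurePreserving_sub_right μ y).quasiMeasurePreserving).restrict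
    _ ≤ ∫⁻ y, w y * C ∂μ := by gcongr; exact hC _
    _ = C := by rw [lintegral_mul_const'' C hw, hw1, one_mul]

end Convolution

theorem setLIntegral_ball_comp_sub_right {G : Type*} [SeminormedAddCommGroup G]
    [MeasurableSpace G] [BorelSpace G] {μ : Measure G} [μ.IsAddRightInvariant] (g : G → ℝ≥0∞)
    (x₀ y : G) (r : ℝ) :
    ∫⁻ x in ball x₀ r, g (x - y) ∂μ = ∫⁻ x in ball (x₀ - y) r, g x ∂μ := by
  rw [← preimage_add_right_ball,
    ← (measurePreserving_add_right μ y).setLIntegral_comp_preimage_emb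
      (measurableEmbedding_addRight y)]
  simp only [add_sub_cancel_right]

section Mollifier

open Module

variable {E : Type*} [NormedAddCommGroup E] [NormedSpace ℝ E]

noncomputable def mollifier (η : E → ℝ) (ε : ℝ) (y : E) : ℝ :=
  (ε ^ finrank ℝ E)⁻¹ * η (ε⁻¹ • y)

theorem mollifier_nonneg {η : E → ℝ} (hη : ∀ y, 0 ≤ η y) {ε : ℝ} (hε : 0 ≤ ε) (y : E) :
    0 ≤ mollifier η ε y :=
  mul_nonneg (inv_nonneg.2 (pow_nonneg hε _)) (hη _)

variable [FiniteDimensional ℝ E] [MeasurableSpace E] [BorelSpace E] {μ : Measure E}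
  [μ.IsAddHaarMeasure]

theorem MeasureTheory.Integrable.mollifier {η : E → ℝ} (hη : Integrable η μ) {ε : ℝ}
    (hε : ε ≠ 0) :
    Integrable (mollifier η ε) μ :=
  ((integrable_comp_smul_iff μ η (inv_ne_zero hε)).2 hη).const_mul _

theorem integral_mollifier (η : E → ℝ) {ε : ℝ} (hε : 0 < ε) :
    ∫ y, mollifier η ε y ∂μ = ∫ y, η y ∂μ := by
  simp only [mollifier]
  rw [integral_const_mul, Measure.integral_comp_inv_smul_of_nonneg μ η hε.le,
    smul_eq_mul, inv_mul_cancel_left₀ (pow_pos hε _).ne']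

end Mollifier

theorem stmt1_general (n m : ℕ) (p L δ r₀ : ℝ) (hp : 1 ≤ p)
    (f : EuclideanSpace ℝ (Fin n) → EuclideanSpace ℝ (Fin m))
    (hmeas : AEStronglyMeasurable f volume)
    (hMorrey : ∀ (x₀ : EuclideanSpace ℝ (Fin n)) (r : ℝ), 0 < r → r < r₀ →
      (∫⁻ x in Metric.ball x₀ r, ENNReal.ofReal (‖f x‖ ^ p)) ≤
        ENNReal.ofReal (L * r ^ ((n : ℝ) - p + δ)))
    (η : EuclideanSpace ℝ (Fin n) → ℝ)
    (hηint : Integrable η) (hηnn : ∀ y, 0 ≤ η y) (hηone : (∫ y, η y) = 1)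
    (ε : ℝ) (hε : 0 < ε) :
    ∀ (x₀ : EuclideanSpace ℝ (Fin n)) (r : ℝ), 0 < r → r < r₀ →
      (∫⁻ x in Metric.ball x₀ r,
          ENNReal.ofReal (‖∫ y, ((ε ^ n)⁻¹ * η (ε⁻¹ • y)) • f (x - y)‖ ^ p)) ≤
        ENNReal.ofReal (L * r ^ ((n : ℝ) - p + δ)) := by
  intro x₀ r hr hrr₀
  have hρ : ∀ y, (ε ^ n)⁻¹ * η (ε⁻¹ • y) = mollifier η ε y := by simp [mollifier]
  have hρ1 : ∫⁻ y, ENNReal.ofReal (mollifier η ε y) = 1 := by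
    rw [← ofReal_integral_eq_lintegral_ofReal (hηint.mollifier hε.ne')
      (ae_of_all _ (mollifier_nonneg hηnn hε.le)), integral_mollifier η hε, hηone, ofReal_one]
  have hρ_meas := (hηint.mollifier (μ := volume) hε.ne').aemeasurable
  have hpow : ∀ v : EuclideanSpace ℝ (Fin m), ENNReal.ofReal (‖v‖ ^ p) = ‖v‖ₑ ^ p := fun v => by
    rw [← ofReal_rpow_of_nonneg (norm_nonneg v) (by linarith), ofReal_norm]
  simp only [hρ, hpow] at hMorrey ⊢
  calc ∫⁻ x in ball x₀ r, ‖∫ y, mollifier η ε y • f (x - y)‖ₑ ^ p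
      ≤ ∫⁻ x in ball x₀ r, ∫⁻ y, ENNReal.ofReal (mollifier η ε y) * ‖f (x - y)‖ₑ ^ p :=
        lintegral_mono fun x => enorm_integral_smul_rpow_le hp hρ_meas
          (mollifier_nonneg hηnn hε.le) hρ1
          (hmeas.comp_quasiMeasurePreserving
            (Measure.measurePreserving_sub_left volume x).quasiMeasurePreserving)
    _ ≤ _ := setLIntegral_lintegral_mul_comp_sub_le hρ_meas.ennreal_ofReal
        (hmeas.enorm.pow_const p) hρ1 fun y =>
          (setLIntegral_ball_comp_sub_right _ x₀ y r).trans_le (hMorrey _ r hr hrr₀)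

/-- Mollification preserves the Morrey-type condition with the same constants
(step (b) of the mollification scheme, Lemma 3.2 of the paper). -/
theorem stmt1 (n m : ℕ) (hn : 1 ≤ n) (p L δ r₀ : ℝ) (hp : 1 ≤ p) (hL : 0 < L)
    (hδ : 0 < δ) (hr₀ : 0 < r₀)
    (f : EuclideanSpace ℝ (Fin n) → EuclideanSpace ℝ (Fin m))
    (hmeas : AEStronglyMeasurable f volume)
    (hLploc : ∀ (x₀ : EuclideanSpace ℝ (Fin n)) (R : ℝ),
      (∫⁻ x in Metric.ball x₀ R, ENNReal.ofReal (‖f x‖ ^ p)) < ⊤)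
    (hMorrey : ∀ (x₀ : EuclideanSpace ℝ (Fin n)) (r : ℝ), 0 < r → r < r₀ →
      (∫⁻ x in Metric.ball x₀ r, ENNReal.ofReal (‖f x‖ ^ p)) ≤
        ENNReal.ofReal (L * r ^ ((n : ℝ) - p + δ)))
    (η : EuclideanSpace ℝ (Fin n) → ℝ)
    (hηint : Integrable η) (hηnn : ∀ y, 0 ≤ η y) (hηone : (∫ y, η y) = 1)
    (ε : ℝ) (hε : 0 < ε) :
    ∀ (x₀ : EuclideanSpace ℝ (Fin n)) (r : ℝ), 0 < r → r < r₀ →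
      (∫⁻ x in Metric.ball x₀ r,
          ENNReal.ofReal (‖∫ y, ((ε ^ n)⁻¹ * η (ε⁻¹ • y)) • f (x - y)‖ ^ p)) ≤
        ENNReal.ofReal (L * r ^ ((n : ℝ) - p + δ)) :=
  stmt1_general n m p L δ r₀ hp f hmeas hMorrey η hηint hηnn hηone ε hε
end

section
/- Let n ≥ 1, p ≥ 1, 0 < δ ≤ p, 0 < r₀ ≤ 1, L > 0, and let f : ℝⁿ → [0,∞) be measurable satisfying the Morrey-type condition with constants (L, p, δ, r₀). Then there is a constant C > 0 depending only on n, p, δ, L and r₀ such that for every x₀ ∈ ℝⁿ and every r ≥ r₀, ∫_{B(x₀,r)} √(f(x)² + 1) dx ≤ C e^{C r}. -/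
open MeasureTheory Metric Module

/-! Averaging the Morrey bound at a fixed radius `ρ < r₀` over all centres `y ∈ B(x₀, r + ρ)`
(Tonelli and translation invariance of Lebesgue measure) gives
`|B_ρ| ∫_{B(x₀,r)} f^p ≤ |B(x₀, r + ρ)| L ρ^(n-p+δ)`, so `∫_{B(x₀,r)} f^p = O(r^n)`.
Since `√(f² + 1) ≤ f^p + 2`, the integral of `√(f² + 1)` over `B(x₀, r)` grows polynomially
in `r`, which is dominated by `C e^(C r)`. -/

section
variable {E : Type*} [NormedAddCommGroup E] [MeasurableSpace E] [BorelSpace E]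
  (μ : Measure E) [μ.IsAddHaarMeasure]

theorem setLIntegral_ball_eq_setLIntegral_ball_zero {g : E → ENNReal} (hg : Measurable g)
    (y : E) (ρ : ℝ) :
    ∫⁻ x in ball y ρ, g x ∂μ = ∫⁻ z in ball 0 ρ, g (y + z) ∂μ := by
  conv_lhs => rw [← map_add_left_eq_self μ y]
  rw [setLIntegral_map measurableSet_ball hg (measurable_const_add y)]
  simp [preimage_add_ball]

theorem setLIntegral_ball_le_setLIntegral_ball_add_right {g : E → ENNReal} (hg : Measurable g)
    (x₀ z : E) {r ρ : ℝ} (hz : ‖z‖ < ρ) :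
    ∫⁻ x in ball x₀ r, g x ∂μ ≤ ∫⁻ y in ball x₀ (r + ρ), g (y + z) ∂μ := by
  conv_lhs => rw [← map_add_right_eq_self μ z]
  rw [setLIntegral_map measurableSet_ball hg (measurable_add_const z)]
  refine lintegral_mono_set fun y (hy : dist (y + z) x₀ < r) ↦ ?_
  calc dist y x₀ ≤ dist y (y + z) + dist (y + z) x₀ := dist_triangle _ _ _
    _ < ρ + r := by rw [dist_self_add_right]; exact add_lt_add hz hy
    _ = r + ρ := add_comm _ _

variable [SecondCountableTopology E] [SFinite μ]

theorem measure_ball_mul_setLIntegral_ball_le {g : E → ENNReal} (hg : Measurable g)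
    (x₀ : E) (r ρ : ℝ) :
    μ (ball 0 ρ) * ∫⁻ x in ball x₀ r, g x ∂μ ≤
      ∫⁻ y in ball x₀ (r + ρ), ∫⁻ x in ball y ρ, g x ∂μ ∂μ := by
  calc μ (ball 0 ρ) * ∫⁻ x in ball x₀ r, g x ∂μ
      = ∫⁻ _ in ball 0 ρ, ∫⁻ x in ball x₀ r, g x ∂μ ∂μ := by
        rw [setLIntegral_const, mul_comm]
    _ ≤ ∫⁻ z in ball 0 ρ, ∫⁻ y in ball x₀ (r + ρ), g (y + z) ∂μ ∂μ :=
        setLIntegral_mono' measurableSet_ball fun z hz ↦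
          setLIntegral_ball_le_setLIntegral_ball_add_right μ hg x₀ z (mem_ball_zero_iff.mp hz)
    _ = ∫⁻ y in ball x₀ (r + ρ), ∫⁻ z in ball 0 ρ, g (y + z) ∂μ ∂μ :=
        lintegral_lintegral_swap (hg.comp (measurable_snd.add measurable_fst)).aemeasurable
    _ = ∫⁻ y in ball x₀ (r + ρ), ∫⁻ x in ball y ρ, g x ∂μ ∂μ := by
        simp_rw [setLIntegral_ball_eq_setLIntegral_ball_zero μ hg]

variable [NormedSpace ℝ E] [FiniteDimensional ℝ E]

theorem setLIntegral_ball_le_of_forall_setLIntegral_ball_le {g : E → ENNReal} (hg : Measurable g)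
    {ρ : ℝ} (hρ : 0 < ρ) {M : ENNReal} (hM : ∀ y, ∫⁻ x in ball y ρ, g x ∂μ ≤ M)
    (x₀ : E) {r : ℝ} (hr : 0 ≤ r) :
    ∫⁻ x in ball x₀ r, g x ∂μ ≤ ENNReal.ofReal (((r + ρ) / ρ) ^ finrank ℝ E) * M := by
  have hvol :
      μ (ball x₀ (r + ρ)) = ENNReal.ofReal (((r + ρ) / ρ) ^ finrank ℝ E) * μ (ball 0 ρ) := by
    rw [← Measure.addHaar_ball_mul_of_pos μ x₀ (by positivity), div_mul_cancel₀ _ hρ.ne']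
  rw [← ENNReal.mul_le_mul_iff_right (measure_ball_pos μ 0 hρ).ne' measure_ball_lt_top.ne]
  calc μ (ball 0 ρ) * ∫⁻ x in ball x₀ r, g x ∂μ
      ≤ ∫⁻ y in ball x₀ (r + ρ), ∫⁻ x in ball y ρ, g x ∂μ ∂μ :=
        measure_ball_mul_setLIntegral_ball_le μ hg x₀ r ρ
    _ ≤ ∫⁻ _ in ball x₀ (r + ρ), M ∂μ := lintegral_mono fun y ↦ hM y
    _ = μ (ball 0 ρ) * (ENNReal.ofReal (((r + ρ) / ρ) ^ finrank ℝ E) * M) := by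
        rw [setLIntegral_const, hvol]; ring
end

theorem Real.sqrt_sq_add_one_le_rpow_add_two {a p : ℝ} (ha : 0 ≤ a) (hp : 1 ≤ p) :
    √(a ^ 2 + 1) ≤ a ^ p + 2 := by
  have hap : a ≤ a ^ p + 1 := by
    rcases le_total a 1 with h | h
    · linarith [Real.rpow_nonneg ha p]
    · linarith [Real.self_le_rpow_of_one_le h hp]
  exact Real.sqrt_le_iff.mpr ⟨by positivity, by nlinarith⟩

theorem mul_pow_le_mul_exp_mul {A r : ℝ} (hA : 0 ≤ A) (hr : 0 ≤ r) (n : ℕ) :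
    A * r ^ n ≤ (A + n) * Real.exp ((A + n) * r) := by
  have hrn : r ^ n ≤ Real.exp ((A + n) * r) :=
    calc r ^ n ≤ Real.exp r ^ n := by gcongr; linarith [Real.add_one_le_exp r]
      _ = Real.exp (n * r) := (Real.exp_nat_mul r n).symm
      _ ≤ Real.exp ((A + n) * r) := by gcongr; linarith
  gcongr
  linarith [(Nat.cast_nonneg n : (0 : ℝ) ≤ n)]

theorem stmt5_general (n : ℕ) (p δ r₀ L : ℝ) (hp : 1 ≤ p) (hr₀ : 0 < r₀) (hL : 0 < L) :
    ∃ C : ℝ, 0 < C ∧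
      ∀ f : EuclideanSpace ℝ (Fin n) → ℝ, Measurable f → (∀ x, 0 ≤ f x) →
      (∀ (x₀ : EuclideanSpace ℝ (Fin n)) (r : ℝ), 0 < r → r < r₀ →
        (∫⁻ x in Metric.ball x₀ r, ENNReal.ofReal (f x ^ p)) ≤
          ENNReal.ofReal (L * r ^ ((n : ℝ) - p + δ))) →
      ∀ (x₀ : EuclideanSpace ℝ (Fin n)) (r : ℝ), r₀ ≤ r →
        (∫⁻ x in Metric.ball x₀ r, ENNReal.ofReal (Real.sqrt (f x ^ 2 + 1))) ≤
          ENNReal.ofReal (C * Real.exp (C * r)) := by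
  obtain ⟨ρ, hρ, hρr₀⟩ : ∃ ρ, 0 < ρ ∧ ρ < r₀ := ⟨r₀ / 2, by positivity, by linarith⟩
  set M := L * ρ ^ ((n : ℝ) - p + δ)
  set k := (volume (ball (0 : EuclideanSpace ℝ (Fin n)) 1)).toReal
  have hk : 0 < k := ENNReal.toReal_pos (measure_ball_pos _ _ one_pos).ne' measure_ball_lt_top.ne
  set A := (2 / ρ) ^ n * M + 2 * k
  refine ⟨A + n, by positivity, fun f hf hf0 hMorrey x₀ r hr ↦ ?_⟩
  have hr0 : 0 < r := by linarith
  have hfp : ∫⁻ x in ball x₀ r, ENNReal.ofReal (f x ^ p) ≤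
      ENNReal.ofReal (((r + ρ) / ρ) ^ n * M) := by
    have := setLIntegral_ball_le_of_forall_setLIntegral_ball_le volume (by fun_prop) hρ
      (fun y ↦ hMorrey y ρ hρ hρr₀) x₀ hr0.le
    rwa [finrank_euclideanSpace_fin, ← ENNReal.ofReal_mul (by positivity)] at this
  have hvol : volume (ball x₀ r) = ENNReal.ofReal (r ^ n * k) := by
    rw [Measure.addHaar_ball_of_pos _ _ hr0, finrank_euclideanSpace_fin,
      ENNReal.ofReal_mul (by positivity), ENNReal.ofReal_toReal measure_ball_lt_top.ne]
  calc ∫⁻ x in ball x₀ r, ENNReal.ofReal √(f x ^ 2 + 1)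
      ≤ ∫⁻ x in ball x₀ r, (ENNReal.ofReal (f x ^ p) + 2) := by
        refine lintegral_mono fun x ↦ ?_
        rw [← ENNReal.ofReal_ofNat 2, ← ENNReal.ofReal_add (Real.rpow_nonneg (hf0 x) p) zero_le_two]
        exact ENNReal.ofReal_le_ofReal (Real.sqrt_sq_add_one_le_rpow_add_two (hf0 x) hp)
    _ = (∫⁻ x in ball x₀ r, ENNReal.ofReal (f x ^ p)) + 2 * volume (ball x₀ r) := by
        rw [lintegral_add_right _ measurable_const, setLIntegral_const, mul_comm 2]
    _ ≤ ENNReal.ofReal (((r + ρ) / ρ) ^ n * M + 2 * (r ^ n * k)) := by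
        rw [hvol, ENNReal.ofReal_add (by positivity) (by positivity),
          ENNReal.ofReal_mul zero_le_two, ENNReal.ofReal_ofNat]
        exact add_le_add hfp le_rfl
    _ ≤ ENNReal.ofReal ((A + n) * Real.exp ((A + n) * r)) := by
        refine ENNReal.ofReal_le_ofReal ?_
        calc ((r + ρ) / ρ) ^ n * M + 2 * (r ^ n * k)
            ≤ (2 * r / ρ) ^ n * M + 2 * (r ^ n * k) := by gcongr; linarith
          _ = A * r ^ n := by ring
          _ ≤ (A + n) * Real.exp ((A + n) * r) := mul_pow_le_mul_exp_mul (by positivity) hr0.le n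

/-- Large-radius growth bound for ∫ √(f²+1) under the Morrey-type condition
(covering-argument step in the proof of Proposition 2.2 of the paper). -/
theorem stmt5 (n : ℕ) (hn : 1 ≤ n) (p δ r₀ L : ℝ) (hp : 1 ≤ p) (hδ : 0 < δ)
    (hδp : δ ≤ p) (hr₀ : 0 < r₀) (hr₀1 : r₀ ≤ 1) (hL : 0 < L) :
    ∃ C : ℝ, 0 < C ∧
      ∀ f : EuclideanSpace ℝ (Fin n) → ℝ, Measurable f → (∀ x, 0 ≤ f x) →
      (∀ (x₀ : EuclideanSpace ℝ (Fin n)) (r : ℝ), 0 < r → r < r₀ →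
        (∫⁻ x in Metric.ball x₀ r, ENNReal.ofReal (f x ^ p)) ≤
          ENNReal.ofReal (L * r ^ ((n : ℝ) - p + δ))) →
      ∀ (x₀ : EuclideanSpace ℝ (Fin n)) (r : ℝ), r₀ ≤ r →
        (∫⁻ x in Metric.ball x₀ r, ENNReal.ofReal (Real.sqrt (f x ^ 2 + 1))) ≤
          ENNReal.ofReal (C * Real.exp (C * r)) :=
  stmt5_general n p δ r₀ L hp hr₀ hL
end

section
/- Let (X, d) be a metric space with a Borel measure μ, let x₀ ∈ X, and let Q : X → [0,∞) be Borel measurable. Let n ≥ 1, a ∈ (0,1), L, C₁, C₀ > 0 and 0 < r₀ ≤ 1, and suppose that ∫_{B(x₀,r)} Q dμ ≤ L r^{n−1+a} for all 0 < r < r₀, and ∫_{B(x₀,r)} Q dμ ≤ C₁ e^{C₁ r} for all r ≥ r₀. Then there exist T₀ ∈ (0,1] and C′ > 0, depending only on n, a, L, C₁, C₀ and r₀, such that for all 0 < T ≤ T₀, ∫_X T^{−n/2} exp(−d(x₀,y)²/(C₀ T)) Q(y) dμ(y) ≤ C′ T^{−(1−a)/2}. -/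
open MeasureTheory Metric Set Real Filter Topology
open scoped ENNReal Nat

/-!
Slice the Gaussian into balls: `exp (-s² / c) = ∫_s^∞ (2r/c) exp (-r² / c) dr`, so by Tonelli
the pairing with `Q` equals `∫₀^∞ (2r/c) exp (-r² / c) F(r) dr`, where `F(r)` is the mass of
`Q μ` on `B(x₀, r)`. Take `c = C₀ T`. On small radii `F(r) ≤ L r^(n-1+a)`, and the Gaussian
moment `∫₀^∞ (2r/c) exp (-r²/c) r^(n-1+a) dr = Γ((n+1+a)/2) c^((n-1+a)/2)` against the
prefactor `T^(-n/2)` is exactly of order `T^(-(1-a)/2)`. On large radii the exponential growth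
of `F` is absorbed by half of the Gaussian, leaving `exp (-r₀² / (2 C₀ T))`, which beats the
prefactor `T^(-n/2)`.
-/

-- `-∂ᵣ exp (-r² / c)`; `ENNReal.ofReal` makes it vanish for `r ≤ 0`.
noncomputable def gaussianRadialDensity (c r : ℝ) : ℝ≥0∞ :=
  ENNReal.ofReal (2 * r / c * exp (-r ^ 2 / c))

lemma measurable_gaussianRadialDensity (c : ℝ) : Measurable (gaussianRadialDensity c) := by
  unfold gaussianRadialDensity; fun_prop

lemma gaussianRadialDensity_of_nonpos {c r : ℝ} (hc : 0 < c) (hr : r ≤ 0) :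
    gaussianRadialDensity c r = 0 := by
  rw [gaussianRadialDensity, ENNReal.ofReal_eq_zero]
  have : 2 * r / c ≤ 0 := div_nonpos_of_nonpos_of_nonneg (by linarith) hc.le
  exact mul_nonpos_of_nonpos_of_nonneg this (exp_pos _).le

lemma lintegral_Ioi_gaussianRadialDensity {c s : ℝ} (hc : 0 < c) (hs : 0 ≤ s) :
    ∫⁻ r in Ioi s, gaussianRadialDensity c r = ENNReal.ofReal (exp (-s ^ 2 / c)) := by
  have hderiv : ∀ r ∈ Ici s, HasDerivAt (fun r => -exp (-r ^ 2 / c))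
      (2 * r / c * exp (-r ^ 2 / c)) r := by
    intro r _
    have h := (((hasDerivAt_pow 2 r).neg.div_const c).exp).neg
    exact h.congr_deriv (by simp only [Pi.neg_apply]; push_cast; ring)
  have hnonneg : ∀ r ∈ Ioi s, 0 ≤ 2 * r / c * exp (-r ^ 2 / c) := fun r hr => by
    have : 0 < r := hs.trans_lt hr
    positivity
  have hlim : Tendsto (fun r => -exp (-r ^ 2 / c)) atTop (𝓝 0) := by
    rw [← neg_zero]
    refine (tendsto_exp_atBot.comp ?_).neg
    simp_rw [neg_div]
    exact tendsto_neg_atTop_atBot.comp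
      ((tendsto_pow_atTop two_ne_zero).atTop_div_const hc)
  have hint := integral_Ioi_of_hasDerivAt_of_nonneg' hderiv hnonneg hlim
  rw [zero_sub, neg_neg] at hint
  rw [← hint, ofReal_integral_eq_lintegral_ofReal
    (integrableOn_Ioi_deriv_of_nonneg' hderiv hnonneg hlim)
    ((ae_restrict_iff' measurableSet_Ioi).2 (Eventually.of_forall hnonneg))]
  rfl

lemma lintegral_Ioi_zero_gaussianRadialDensity_mul_rpow {c b : ℝ} (hc : 0 < c) (hb : -2 < b) :
    ∫⁻ r in Ioi 0, gaussianRadialDensity c r * ENNReal.ofReal (r ^ b)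
      = ENNReal.ofReal (c ^ (b / 2) * Gamma (b / 2 + 1)) := by
  have hpt : ∀ r ∈ Ioi (0 : ℝ), gaussianRadialDensity c r * ENNReal.ofReal (r ^ b)
      = ENNReal.ofReal (2 / c * (r ^ (b + 1) * exp (-(1 / c) * r ^ (2 : ℝ)))) := by
    intro r (hr : 0 < r)
    rw [gaussianRadialDensity, ← ENNReal.ofReal_mul (by positivity), rpow_add_one hr.ne',
      rpow_two]
    congr 1
    field_simp
  have hint : IntegrableOn (fun r : ℝ => r ^ (b + 1) * exp (-(1 / c) * r ^ (2 : ℝ))) (Ioi 0) :=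
    integrableOn_rpow_mul_exp_neg_mul_rpow (by linarith) two_pos (by positivity)
  rw [setLIntegral_congr_fun measurableSet_Ioi hpt, ← ofReal_integral_eq_lintegral_ofReal
    (hint.const_mul _) ((ae_restrict_iff' measurableSet_Ioi).2 (Eventually.of_forall
      fun r (hr : 0 < r) => by positivity)), integral_const_mul,
    integral_rpow_mul_exp_neg_mul_rpow two_pos (by linarith) (by positivity)]
  congr 1
  rw [one_div c, inv_rpow hc.le, ← rpow_neg hc.le, neg_div, neg_neg,
    show (b + 1 + 1) / 2 = b / 2 + 1 by ring, rpow_add_one hc.ne']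
  field_simp

lemma gaussianRadialDensity_mul_exp_le {c C r : ℝ} (hc : 0 < c) (hC : 0 ≤ C) (hr : 0 ≤ r) :
    gaussianRadialDensity c r * ENNReal.ofReal (C * exp (C * r))
      ≤ ENNReal.ofReal (2 * C * exp (c * C ^ 2 / 2)) * gaussianRadialDensity (2 * c) r := by
  -- `C r ≤ r² / (2c) + c C² / 2`: half of the Gaussian decay absorbs the growth of `exp (C r)`
  have hexpo : -r ^ 2 / c + C * r ≤ c * C ^ 2 / 2 + -r ^ 2 / (2 * c) := by
    have key : c * C ^ 2 / 2 + -r ^ 2 / (2 * c) - (-r ^ 2 / c + C * r)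
        = (r - c * C) ^ 2 / (2 * c) := by
      field_simp; ring
    have : 0 ≤ (r - c * C) ^ 2 / (2 * c) := by positivity
    linarith
  rw [gaussianRadialDensity, gaussianRadialDensity, ← ENNReal.ofReal_mul (by positivity),
    ← ENNReal.ofReal_mul (by positivity)]
  refine ENNReal.ofReal_le_ofReal ?_
  calc 2 * r / c * exp (-r ^ 2 / c) * (C * exp (C * r))
      = 2 * r / c * C * exp (-r ^ 2 / c + C * r) := by rw [exp_add]; ring
    _ ≤ 2 * r / c * C * exp (c * C ^ 2 / 2 + -r ^ 2 / (2 * c)) := by gcongr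
    _ = 2 * C * exp (c * C ^ 2 / 2) * (2 * r / (2 * c) * exp (-r ^ 2 / (2 * c))) := by
        rw [exp_add]; field_simp

lemma lintegral_Ici_gaussianRadialDensity_mul_exp_le {c C s : ℝ} (hc : 0 < c) (hC : 0 ≤ C)
    (hs : 0 ≤ s) :
    ∫⁻ r in Ici s, gaussianRadialDensity c r * ENNReal.ofReal (C * exp (C * r))
      ≤ ENNReal.ofReal (2 * C * exp (c * C ^ 2 / 2) * exp (-s ^ 2 / (2 * c))) := by
  calc ∫⁻ r in Ici s, gaussianRadialDensity c r * ENNReal.ofReal (C * exp (C * r))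
      ≤ ∫⁻ r in Ici s, ENNReal.ofReal (2 * C * exp (c * C ^ 2 / 2))
          * gaussianRadialDensity (2 * c) r :=
        setLIntegral_mono' measurableSet_Ici fun r hr =>
          gaussianRadialDensity_mul_exp_le hc hC (hs.trans hr)
    _ = ENNReal.ofReal (2 * C * exp (c * C ^ 2 / 2))
          * ∫⁻ r in Ioi s, gaussianRadialDensity (2 * c) r := by
        rw [lintegral_const_mul' _ _ ENNReal.ofReal_ne_top,
          setLIntegral_congr Ioi_ae_eq_Ici.symm]
    _ = _ := by
        rw [lintegral_Ioi_gaussianRadialDensity (by positivity) hs,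
          ← ENNReal.ofReal_mul (by positivity)]

lemma lintegral_gaussianRadialDensity_mul_le {c L C b r₀ : ℝ} (hc : 0 < c) (hL : 0 ≤ L)
    (hC : 0 ≤ C) (hb : -2 < b) (hr₀ : 0 ≤ r₀) {F : ℝ → ℝ≥0∞}
    (hF_small : ∀ r, 0 < r → r < r₀ → F r ≤ ENNReal.ofReal (L * r ^ b))
    (hF_large : ∀ r, r₀ ≤ r → F r ≤ ENNReal.ofReal (C * exp (C * r))) :
    ∫⁻ r, gaussianRadialDensity c r * F r
      ≤ ENNReal.ofReal (L * (c ^ (b / 2) * Gamma (b / 2 + 1)))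
        + ENNReal.ofReal (2 * C * exp (c * C ^ 2 / 2) * exp (-r₀ ^ 2 / (2 * c))) := by
  have hψ : Measurable (gaussianRadialDensity c) := measurable_gaussianRadialDensity c
  have hsplit : ∀ r, gaussianRadialDensity c r * F r
      ≤ (Ioi 0).indicator (fun r => gaussianRadialDensity c r * ENNReal.ofReal (L * r ^ b)) r
        + (Ici r₀).indicator
          (fun r => gaussianRadialDensity c r * ENNReal.ofReal (C * exp (C * r))) r := by
    intro r
    rcases le_or_gt r 0 with hr0 | hr0
    · simp [gaussianRadialDensity_of_nonpos hc hr0]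
    rcases lt_or_ge r r₀ with hr | hr
    · rw [indicator_of_mem (mem_Ioi.2 hr0)]
      exact (mul_le_mul_of_nonneg_left (hF_small r hr0 hr) zero_le).trans le_self_add
    · rw [indicator_of_mem (mem_Ici.2 hr)]
      exact (mul_le_mul_of_nonneg_left (hF_large r hr) zero_le).trans le_add_self
  calc ∫⁻ r, gaussianRadialDensity c r * F r
      ≤ ∫⁻ r, ((Ioi 0).indicator
            (fun r => gaussianRadialDensity c r * ENNReal.ofReal (L * r ^ b)) r
          + (Ici r₀).indicator
            (fun r => gaussianRadialDensity c r * ENNReal.ofReal (C * exp (C * r))) r) :=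
        lintegral_mono hsplit
    _ = ENNReal.ofReal L
            * (∫⁻ r in Ioi 0, gaussianRadialDensity c r * ENNReal.ofReal (r ^ b))
          + ∫⁻ r in Ici r₀, gaussianRadialDensity c r * ENNReal.ofReal (C * exp (C * r)) := by
        rw [lintegral_add_left ((by fun_prop : Measurable _).indicator measurableSet_Ioi),
          lintegral_indicator measurableSet_Ioi, lintegral_indicator measurableSet_Ici,
          ← lintegral_const_mul _ (by fun_prop)]
        simp_rw [ENNReal.ofReal_mul hL, mul_left_comm (ENNReal.ofReal L)]
    _ ≤ _ := by
        rw [lintegral_Ioi_zero_gaussianRadialDensity_mul_rpow hc hb, ← ENNReal.ofReal_mul hL]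
        exact add_le_add le_rfl (lintegral_Ici_gaussianRadialDensity_mul_exp_le hc hC hr₀)

lemma lintegral_lintegral_Ioi_dist_mul {X : Type*} [PseudoMetricSpace X] [MeasurableSpace X]
    [OpensMeasurableSpace X] (μ : Measure X) [SFinite μ] (x₀ : X) {ψ : ℝ → ℝ≥0∞}
    (hψ : Measurable ψ) {g : X → ℝ≥0∞} (hg : Measurable g) :
    ∫⁻ y, (∫⁻ r in Ioi (dist x₀ y), ψ r) * g y ∂μ
      = ∫⁻ r, ψ r * ∫⁻ y in ball x₀ r, g y ∂μ := by
  set S : Set (X × ℝ) := {p | dist x₀ p.1 < p.2}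
  have hS : MeasurableSet S := measurableSet_lt (by fun_prop) measurable_snd
  set F : X × ℝ → ℝ≥0∞ := S.indicator fun p => ψ p.2 * g p.1
  have hF : Measurable F := ((hψ.comp measurable_snd).mul (hg.comp measurable_fst)).indicator hS
  have h_left (y : X) : (∫⁻ r in Ioi (dist x₀ y), ψ r) * g y = ∫⁻ r, F (y, r) := by
    rw [← lintegral_mul_const _ hψ, ← lintegral_indicator measurableSet_Ioi]
    congr 1 with r
  have h_right (r : ℝ) :
      ψ r * ∫⁻ y in ball x₀ r, g y ∂μ = ∫⁻ y, F (y, r) ∂μ := by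
    rw [← lintegral_const_mul _ hg, ← lintegral_indicator measurableSet_ball]
    congr 1 with y
    classical
    rw [indicator_apply, mem_ball']
    rfl
  simp_rw [h_left, h_right]
  exact lintegral_lintegral_swap (f := fun y r => F (y, r)) hF.aemeasurable

lemma rpow_neg_half_mul_exp_neg_div_le {T κ : ℝ} (hT : 0 < T) (hT1 : T ≤ 1) (hκ : 0 < κ)
    (n : ℕ) : T ^ (-(n : ℝ) / 2) * exp (-κ / T) ≤ n ! / κ ^ n := by
  have hexp : exp (-κ / T) ≤ n ! / κ ^ n * T ^ n := by
    calc exp (-κ / T) = (exp (κ / T))⁻¹ := by rw [neg_div, exp_neg]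
      _ ≤ ((κ / T) ^ n / n !)⁻¹ :=
        inv_anti₀ (by positivity) (Real.pow_div_factorial_le_exp _ (by positivity) n)
      _ = n ! / κ ^ n * T ^ n := by rw [div_pow]; field_simp
  have hpow : T ^ (-(n : ℝ) / 2) * T ^ n ≤ 1 := by
    rw [← rpow_natCast, ← rpow_add hT]
    exact rpow_le_one hT.le hT1 (by linarith [(n.cast_nonneg : (0 : ℝ) ≤ n)])
  calc T ^ (-(n : ℝ) / 2) * exp (-κ / T)
      ≤ T ^ (-(n : ℝ) / 2) * (n ! / κ ^ n * T ^ n) := by gcongr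
    _ = n ! / κ ^ n * (T ^ (-(n : ℝ) / 2) * T ^ n) := by ring
    _ ≤ n ! / κ ^ n := mul_le_of_le_one_right (by positivity) hpow

lemma rpow_neg_half_mul_gaussian_tail_le (n : ℕ) {T C₀ C₁ r₀ : ℝ} (hT : 0 < T)
    (hT1 : T ≤ 1) (hC₀ : 0 < C₀) (hC₁ : 0 ≤ C₁) (hr₀ : 0 < r₀) :
    T ^ (-(n : ℝ) / 2)
        * (2 * C₁ * exp (C₀ * T * C₁ ^ 2 / 2) * exp (-r₀ ^ 2 / (2 * (C₀ * T))))
      ≤ 2 * C₁ * exp (C₀ * C₁ ^ 2 / 2) * (n ! / (r₀ ^ 2 / (2 * C₀)) ^ n) := by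
  have hgrowth : exp (C₀ * T * C₁ ^ 2 / 2) ≤ exp (C₀ * C₁ ^ 2 / 2) :=
    exp_le_exp.2 (by nlinarith [mul_nonneg hC₀.le (sq_nonneg C₁)])
  have hκ : -r₀ ^ 2 / (2 * (C₀ * T)) = -(r₀ ^ 2 / (2 * C₀)) / T := by field_simp
  calc T ^ (-(n : ℝ) / 2) * (2 * C₁ * exp (C₀ * T * C₁ ^ 2 / 2)
        * exp (-r₀ ^ 2 / (2 * (C₀ * T))))
      = 2 * C₁ * exp (C₀ * T * C₁ ^ 2 / 2)
          * (T ^ (-(n : ℝ) / 2) * exp (-(r₀ ^ 2 / (2 * C₀)) / T)) := by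
        rw [hκ]; ring
    _ ≤ _ := by
        gcongr
        exact rpow_neg_half_mul_exp_neg_div_le hT hT1 (by positivity) n

lemma rpow_neg_half_mul_mul_rpow_half {T C : ℝ} (hT : 0 < T) (hC : 0 ≤ C) (s a : ℝ) :
    T ^ (-s / 2) * (C * T) ^ ((s - 1 + a) / 2) = C ^ ((s - 1 + a) / 2) * T ^ (-(1 - a) / 2) := by
  rw [mul_rpow hC hT.le, mul_left_comm, ← rpow_add hT]
  ring_nf

lemma lintegral_exp_neg_dist_sq_mul_le {X : Type*} [PseudoMetricSpace X] [MeasurableSpace X]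
    [OpensMeasurableSpace X] (μ : Measure X) [SFinite μ] (x₀ : X) {Q : X → ℝ}
    (hQ : Measurable Q) {c L C b r₀ : ℝ} (hc : 0 < c) (hL : 0 ≤ L) (hC : 0 ≤ C)
    (hb : -2 < b) (hr₀ : 0 ≤ r₀)
    (h_small : ∀ r, 0 < r → r < r₀ →
      ∫⁻ y in ball x₀ r, ENNReal.ofReal (Q y) ∂μ ≤ ENNReal.ofReal (L * r ^ b))
    (h_large : ∀ r, r₀ ≤ r →
      ∫⁻ y in ball x₀ r, ENNReal.ofReal (Q y) ∂μ ≤ ENNReal.ofReal (C * exp (C * r))) :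
    ∫⁻ y, ENNReal.ofReal (exp (-dist x₀ y ^ 2 / c)) * ENNReal.ofReal (Q y) ∂μ
      ≤ ENNReal.ofReal (L * (c ^ (b / 2) * Gamma (b / 2 + 1)))
        + ENNReal.ofReal (2 * C * exp (c * C ^ 2 / 2) * exp (-r₀ ^ 2 / (2 * c))) := by
  simp_rw [← lintegral_Ioi_gaussianRadialDensity hc dist_nonneg]
  rw [lintegral_lintegral_Ioi_dist_mul μ x₀ (measurable_gaussianRadialDensity c)
    hQ.ennreal_ofReal]
  exact lintegral_gaussianRadialDensity_mul_le hc hL hC hb hr₀ h_small h_large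

theorem stmt9_general (n : ℕ) (a L C₁ C₀ r₀ : ℝ) (ha0 : 0 < a) (ha1 : a < 1)
    (hL : 0 < L) (hC₁ : 0 < C₁) (hC₀ : 0 < C₀) (hr₀0 : 0 < r₀) :
    ∃ T₀ C' : ℝ, 0 < T₀ ∧ T₀ ≤ 1 ∧ 0 < C' ∧
      ∀ (X : Type) (_ : MetricSpace X) (_ : MeasurableSpace X)
        (_ : OpensMeasurableSpace X) (μ : Measure X) (_ : SFinite μ)
        (x₀ : X) (Q : X → ℝ), Measurable Q → (∀ y, 0 ≤ Q y) →
        (∀ r : ℝ, 0 < r → r < r₀ →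
          (∫⁻ y in Metric.ball x₀ r, ENNReal.ofReal (Q y) ∂μ) ≤
            ENNReal.ofReal (L * r ^ ((n : ℝ) - 1 + a))) →
        (∀ r : ℝ, r₀ ≤ r →
          (∫⁻ y in Metric.ball x₀ r, ENNReal.ofReal (Q y) ∂μ) ≤
            ENNReal.ofReal (C₁ * Real.exp (C₁ * r))) →
        ∀ T : ℝ, 0 < T → T ≤ T₀ →
          (∫⁻ y, ENNReal.ofReal
              (T ^ (-(n : ℝ)/2) * Real.exp (-(dist x₀ y)^2 / (C₀ * T)) * Q y) ∂μ) ≤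
            ENNReal.ofReal (C' * T ^ (-(1 - a)/2)) := by
  set b : ℝ := (n : ℝ) - 1 + a
  have hb : -2 < b := by linarith [(n.cast_nonneg : (0 : ℝ) ≤ n)]
  have hΓ : 0 < Gamma (b / 2 + 1) := Gamma_pos_of_pos (by linarith)
  set A : ℝ := L * (C₀ ^ (b / 2) * Gamma (b / 2 + 1))
  set B : ℝ := 2 * C₁ * exp (C₀ * C₁ ^ 2 / 2) * (n ! / (r₀ ^ 2 / (2 * C₀)) ^ n)
  refine ⟨1, A + B, one_pos, le_rfl, by positivity, ?_⟩
  intro X _ _ _ μ _ x₀ Q hQ _ h_small h_large T hT hT1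
  have hA : T ^ (-(n : ℝ) / 2) * (L * ((C₀ * T) ^ (b / 2) * Gamma (b / 2 + 1)))
      = A * T ^ (-(1 - a) / 2) := by
    have h := rpow_neg_half_mul_mul_rpow_half hT hC₀.le n a
    rw [show (n : ℝ) - 1 + a = b from rfl] at h
    linear_combination L * Gamma (b / 2 + 1) * h
  have hB := (rpow_neg_half_mul_gaussian_tail_le n hT hT1 hC₀ hC₁.le hr₀0).trans
    (le_mul_of_one_le_right (by positivity) (one_le_rpow_of_pos_of_le_one_of_nonpos hT hT1
      (by linarith)) : B ≤ B * T ^ (-(1 - a) / 2))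
  calc ∫⁻ y, ENNReal.ofReal
          (T ^ (-(n : ℝ) / 2) * exp (-dist x₀ y ^ 2 / (C₀ * T)) * Q y) ∂μ
      = ENNReal.ofReal (T ^ (-(n : ℝ) / 2)) * ∫⁻ y, ENNReal.ofReal
          (exp (-dist x₀ y ^ 2 / (C₀ * T))) * ENNReal.ofReal (Q y) ∂μ := by
        simp_rw [mul_assoc, ENNReal.ofReal_mul (rpow_nonneg hT.le _),
          ENNReal.ofReal_mul (exp_pos _).le]
        exact lintegral_const_mul' _ _ ENNReal.ofReal_ne_top
    _ ≤ ENNReal.ofReal (T ^ (-(n : ℝ) / 2)) * (ENNReal.ofReal (L * ((C₀ * T) ^ (b / 2)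
          * Gamma (b / 2 + 1))) + ENNReal.ofReal (2 * C₁ * exp (C₀ * T * C₁ ^ 2 / 2)
          * exp (-r₀ ^ 2 / (2 * (C₀ * T))))) := by
        gcongr
        exact lintegral_exp_neg_dist_sq_mul_le μ x₀ hQ (by positivity) hL.le hC₁.le hb
          hr₀0.le h_small h_large
    _ ≤ ENNReal.ofReal ((A + B) * T ^ (-(1 - a) / 2)) := by
        rw [← ENNReal.ofReal_add (by positivity) (by positivity),
          ← ENNReal.ofReal_mul (by positivity), mul_add, hA, add_mul]
        exact ENNReal.ofReal_le_ofReal (add_le_add le_rfl hB)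

/-- The heat-kernel pairing estimate (2.13)–(2.14) in the proof of the gradient
estimate, Proposition 2.2 of the paper: a Gaussian kernel paired against a
function with Morrey-type ball bounds is bounded by C′ T^{−(1−a)/2}. -/
theorem stmt9 (n : ℕ) (hn : 1 ≤ n) (a L C₁ C₀ r₀ : ℝ) (ha0 : 0 < a) (ha1 : a < 1)
    (hL : 0 < L) (hC₁ : 0 < C₁) (hC₀ : 0 < C₀) (hr₀0 : 0 < r₀) (hr₀1 : r₀ ≤ 1) :
    ∃ T₀ C' : ℝ, 0 < T₀ ∧ T₀ ≤ 1 ∧ 0 < C' ∧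
      ∀ (X : Type) (_ : MetricSpace X) (_ : MeasurableSpace X)
        (_ : OpensMeasurableSpace X) (μ : Measure X) (_ : SFinite μ)
        (x₀ : X) (Q : X → ℝ), Measurable Q → (∀ y, 0 ≤ Q y) →
        (∀ r : ℝ, 0 < r → r < r₀ →
          (∫⁻ y in Metric.ball x₀ r, ENNReal.ofReal (Q y) ∂μ) ≤
            ENNReal.ofReal (L * r ^ ((n : ℝ) - 1 + a))) →
        (∀ r : ℝ, r₀ ≤ r →
          (∫⁻ y in Metric.ball x₀ r, ENNReal.ofReal (Q y) ∂μ) ≤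
            ENNReal.ofReal (C₁ * Real.exp (C₁ * r))) →
        ∀ T : ℝ, 0 < T → T ≤ T₀ →
          (∫⁻ y, ENNReal.ofReal
              (T ^ (-(n : ℝ)/2) * Real.exp (-(dist x₀ y)^2 / (C₀ * T)) * Q y) ∂μ) ≤
            ENNReal.ofReal (C' * T ^ (-(1 - a)/2)) :=
  stmt9_general n a L C₁ C₀ r₀ ha0 ha1 hL hC₁ hC₀ hr₀0
end

section
/- Let U ⊆ ℝⁿ be open and let g : U → Sym⁺(n) be a smooth Riemannian metric in coordinates. Then for every smooth compactly supported u : U → ℝ, ∫_U ( −V·∇(u √(det g)) + F u √(det g) ) dx = ∫_U R_g u √(det g) dx, where V, F are the first-order quantities built from g with Euclidean background and R_g is the classical scalar curvature of g. In other words, for a smooth metric the distributional scalar curvature pairing coincides with integration against the classical scalar curvature. -/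
open MeasureTheory

/-- The `i`-th partial derivative of a real-valued function on ℝⁿ
(Euclidean background). -/
noncomputable def pd {n : ℕ} (i : Fin n) (f : EuclideanSpace ℝ (Fin n) → ℝ)
    (x : EuclideanSpace ℝ (Fin n)) : ℝ :=
  fderiv ℝ f x (EuclideanSpace.single i 1)


abbrev Eu (n : ℕ) := EuclideanSpace ℝ (Fin n)

namespace SC

variable {n : ℕ}



lemma pd_congr {f h : Eu n → ℝ} {x : Eu n} (hfh : f =ᶠ[nhds x] h) (i : Fin n) :
    pd i f x = pd i h x := by
  unfold pd; rw [hfh.fderiv_eq]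

lemma pd_zero_of_eventually_zero {f : Eu n → ℝ} {x : Eu n} (h : f =ᶠ[nhds x] 0) (i : Fin n) :
    pd i f x = 0 := by
  rw [pd_congr h]; unfold pd
  rw [show (0 : Eu n → ℝ) = fun _ => (0:ℝ) from rfl, fderiv_fun_const]
  simp

lemma pd_sub {f h : Eu n → ℝ} {x : Eu n} (hf : DifferentiableAt ℝ f x)
    (hh : DifferentiableAt ℝ h x) (i : Fin n) :
    pd i (fun z => f z - h z) x = pd i f x - pd i h x := by
  unfold pd; rw [fderiv_fun_sub hf hh]; simp

lemma pd_mul {f h : Eu n → ℝ} {x : Eu n} (hf : DifferentiableAt ℝ f x)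
    (hh : DifferentiableAt ℝ h x) (i : Fin n) :
    pd i (fun z => f z * h z) x = pd i f x * h x + f x * pd i h x := by
  unfold pd; rw [fderiv_fun_mul hf hh]
  simp [smul_eq_mul]
  ring

lemma pd_sum {ι : Type*} (s : Finset ι) {f : ι → Eu n → ℝ} {x : Eu n}
    (h : ∀ j ∈ s, DifferentiableAt ℝ (f j) x) (i : Fin n) :
    pd i (fun z => ∑ j ∈ s, f j z) x = ∑ j ∈ s, pd i (f j) x := by
  unfold pd; rw [fderiv_fun_sum h]; simp

lemma diffAt {U : Set (Eu n)} {f : Eu n → ℝ} (hU : IsOpen U) (hf : ContDiffOn ℝ (⊤ : ℕ∞) f U)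
    {x : Eu n} (hx : x ∈ U) : DifferentiableAt ℝ f x :=
  (hf.contDiffAt (hU.mem_nhds hx)).differentiableAt (by simp)

lemma contDiffOn_pd {U : Set (Eu n)} {f : Eu n → ℝ} (hU : IsOpen U)
    (hf : ContDiffOn ℝ (⊤ : ℕ∞) f U) (i : Fin n) :
    ContDiffOn ℝ (⊤ : ℕ∞) (fun x => pd i f x) U := by
  have h1 : ContDiffOn ℝ (⊤ : ℕ∞) (fderiv ℝ f) U := hf.fderiv_of_isOpen hU (by simp)
  exact h1.clm_apply contDiffOn_const

lemma contDiffOn_prod {ι : Type*} {U : Set (Eu n)} (s : Finset ι) {f : ι → Eu n → ℝ}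
    (h : ∀ i ∈ s, ContDiffOn ℝ (⊤ : ℕ∞) (f i) U) :
    ContDiffOn ℝ (⊤ : ℕ∞) (fun x => ∏ i ∈ s, f i x) U := by
  classical
  induction s using Finset.induction with
  | empty => simpa using contDiffOn_const
  | insert a s hni ih =>
    next =>
      simp only [Finset.prod_insert hni]
      exact (h a (Finset.mem_insert_self a s)).mul
        (ih fun i hi => h i (Finset.mem_insert_of_mem hi))

lemma contDiffOn_det {U : Set (Eu n)} {M : Eu n → Matrix (Fin n) (Fin n) ℝ}
    (h : ∀ i j, ContDiffOn ℝ (⊤ : ℕ∞) (fun x => M x i j) U) :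
    ContDiffOn ℝ (⊤ : ℕ∞) (fun x => (M x).det) U := by
  simp only [Matrix.det_apply']
  exact ContDiffOn.sum fun σ _ =>
    contDiffOn_const.mul (contDiffOn_prod Finset.univ fun i _ => h (σ i) i)

lemma contDiffOn_inv_entry {U : Set (Eu n)} {g : Eu n → Matrix (Fin n) (Fin n) ℝ}
    (hsmooth : ∀ i j, ContDiffOn ℝ (⊤ : ℕ∞) (fun x => g x i j) U)
    (hpos : ∀ x ∈ U, (g x).PosDef) (i j : Fin n) :
    ContDiffOn ℝ (⊤ : ℕ∞) (fun x => (g x)⁻¹ i j) U := by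
  have hdet : ContDiffOn ℝ (⊤ : ℕ∞) (fun x => (g x).det) U := contDiffOn_det hsmooth
  have hne : ∀ x ∈ U, (g x).det ≠ 0 := fun x hx => (hpos x hx).det_pos.ne'
  have hadj : ContDiffOn ℝ (⊤ : ℕ∞) (fun x => (g x).adjugate i j) U := by
    simp only [Matrix.adjugate_apply]
    refine contDiffOn_det fun a b => ?_
    by_cases hab : a = j
    · simp only [hab, Matrix.updateRow_apply, if_pos rfl]
      exact contDiffOn_const
    · simp only [Matrix.updateRow_apply, if_neg hab]
      exact hsmooth a b
  have : ∀ x ∈ U, (g x)⁻¹ i j = (g x).det⁻¹ * (g x).adjugate i j := by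
    intro x hx
    rw [Matrix.inv_def]
    simp [Ring.inverse_eq_inv']
  exact ((hdet.inv hne).mul hadj).congr this

variable (g : Eu n → Matrix (Fin n) (Fin n) ℝ)

noncomputable def Psi (x : Eu n) (k i j : Fin n) : ℝ :=
  (1/2) * ∑ l, (g x)⁻¹ k l *
    (pd i (fun z => g z j l) x + pd j (fun z => g z i l) x - pd l (fun z => g z i j) x)

noncomputable def Vf (x : Eu n) (k : Fin n) : ℝ :=
  (∑ i, ∑ j, (g x)⁻¹ i j * Psi g x k i j) - ∑ i, ∑ j, (g x)⁻¹ i k * Psi g x j j i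

noncomputable def Ff (x : Eu n) : ℝ :=
  -(∑ k, ∑ i, ∑ j, pd k (fun z => (g z)⁻¹ i j) x * Psi g x k i j)
    + (∑ k, ∑ i, pd k (fun z => (g z)⁻¹ i k) x * ∑ j, Psi g x j j i)
    + ∑ i, ∑ j, (g x)⁻¹ i j *
        ∑ k, ∑ l, (Psi g x k k l * Psi g x l i j - Psi g x k j l * Psi g x l i k)

noncomputable def Rf (x : Eu n) : ℝ :=
  ∑ i, ∑ j, (g x)⁻¹ i j *
    ((∑ k, pd k (fun z => Psi g z k i j) x) - (∑ k, pd i (fun z => Psi g z k k j) x)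
      + ∑ k, ∑ l, (Psi g x k k l * Psi g x l i j - Psi g x k i l * Psi g x l k j))

variable {U : Set (Eu n)} (hU : IsOpen U)
  (hsmooth : ∀ i j, ContDiffOn ℝ (⊤ : ℕ∞) (fun x => g x i j) U)
  (hpos : ∀ x ∈ U, (g x).PosDef)

include hU hsmooth hpos

lemma contDiffOn_Psi (k i j : Fin n) : ContDiffOn ℝ (⊤ : ℕ∞) (fun x => Psi g x k i j) U := by
  unfold Psi
  refine contDiffOn_const.mul (ContDiffOn.sum fun l _ => ?_)
  exact (contDiffOn_inv_entry hsmooth hpos k l).mul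
    (((contDiffOn_pd hU (hsmooth j l) i).add (contDiffOn_pd hU (hsmooth i l) j)).sub
      (contDiffOn_pd hU (hsmooth i j) l))

lemma contDiffOn_Vf (k : Fin n) : ContDiffOn ℝ (⊤ : ℕ∞) (fun x => Vf g x k) U := by
  unfold Vf
  refine ContDiffOn.sub (ContDiffOn.sum fun i _ => ContDiffOn.sum fun j _ => ?_)
    (ContDiffOn.sum fun i _ => ContDiffOn.sum fun j _ => ?_)
  · exact (contDiffOn_inv_entry hsmooth hpos i j).mul (contDiffOn_Psi g hU hsmooth hpos k i j)
  · exact (contDiffOn_inv_entry hsmooth hpos i k).mul (contDiffOn_Psi g hU hsmooth hpos j j i)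


lemma g_symm {x : Eu n} (hx : x ∈ U) (i j : Fin n) : g x i j = g x j i := by
  have h := (hpos x hx).1
  have := congrFun (congrFun h j) i
  simpa [Matrix.conjTranspose_apply] using this

lemma ginv_symm {x : Eu n} (hx : x ∈ U) (i j : Fin n) : (g x)⁻¹ i j = (g x)⁻¹ j i := by
  have h := (hpos x hx).1.inv
  have := congrFun (congrFun h j) i
  simpa [Matrix.conjTranspose_apply] using this

lemma Psi_symm {x : Eu n} (hx : x ∈ U) (k i j : Fin n) :
    Psi g x k i j = Psi g x k j i := by
  have hpd : ∀ l : Fin n, pd l (fun z => g z i j) x = pd l (fun z => g z j i) x := by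
    intro l
    refine pd_congr ?_ l
    filter_upwards [hU.mem_nhds hx] with z hz
    exact g_symm g hU hsmooth hpos hz i j
  unfold Psi
  congr 1
  refine Finset.sum_congr rfl fun l _ => ?_
  rw [hpd l]
  ring

lemma key_algebra (a : Fin n → Fin n → ℝ) (b : Fin n → Fin n → Fin n → ℝ)
    (p : Fin n → Fin n → Fin n → ℝ) (q : Fin n → Fin n → Fin n → Fin n → ℝ)
    (hasym : ∀ i j, a i j = a j i) (hpsym : ∀ k i j, p k i j = p k j i) :
    (∑ k, ((∑ i, ∑ j, (b k i j * p k i j + a i j * q k k i j))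
        - ∑ i, ∑ j, (b k i k * p j j i + a i k * q k j j i)))
      + (-(∑ k, ∑ i, ∑ j, b k i j * p k i j)
          + (∑ k, ∑ i, b k i k * ∑ j, p j j i)
          + ∑ i, ∑ j, a i j * ∑ k, ∑ l, (p k k l * p l i j - p k j l * p l i k))
      = ∑ i, ∑ j, a i j *
          ((∑ k, q k k i j) - (∑ k, q i k k j)
            + ∑ k, ∑ l, (p k k l * p l i j - p k i l * p l k j)) := by
  have sum_rot : ∀ f : Fin n → Fin n → Fin n → ℝ,
      ∑ k, ∑ i, ∑ j, f k i j = ∑ i, ∑ j, ∑ k, f k i j := by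
    intro f
    rw [Finset.sum_comm]
    exact Finset.sum_congr rfl fun i _ => Finset.sum_comm
  have hA : ∑ k, ∑ i, ∑ j, a i j * q k k i j = ∑ i, ∑ j, ∑ k, a i j * q k k i j :=
    sum_rot _
  have hB : ∑ k, ∑ i, ∑ j, a i k * q k j j i = ∑ i, ∑ j, ∑ k, a i j * q i k k j := by
    refine Finset.sum_congr rfl fun k _ => Finset.sum_congr rfl fun i _ =>
      Finset.sum_congr rfl fun j _ => ?_
    rw [hasym i k]
  have hC : ∀ i j : Fin n, ∑ k, ∑ l, p k j l * p l i k = ∑ k, ∑ l, p k i l * p l k j := by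
    intro i j
    rw [Finset.sum_comm]
    refine Finset.sum_congr rfl fun k _ => Finset.sum_congr rfl fun l _ => ?_
    rw [hpsym l j k, mul_comm]
  simp only [Finset.sum_add_distrib, Finset.sum_sub_distrib, Finset.mul_sum, mul_sub, mul_add]
  rw [hA, hB]
  have hC' : ∑ i, ∑ j, ∑ k, ∑ l, a i j * (p k j l * p l i k)
      = ∑ i, ∑ j, ∑ k, ∑ l, a i j * (p k i l * p l k j) := by
    refine Finset.sum_congr rfl fun i _ => Finset.sum_congr rfl fun j _ => ?_
    simp only [← Finset.mul_sum]
    rw [hC i j]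
  rw [hC']
  ring


lemma keyid {x : Eu n} (hx : x ∈ U) :
    (∑ k, pd k (fun z => Vf g z k) x) + Ff g x = Rf g x := by
  have hdG : ∀ i j : Fin n, DifferentiableAt ℝ (fun z => (g z)⁻¹ i j) x :=
    fun i j => diffAt hU (contDiffOn_inv_entry hsmooth hpos i j) hx
  have hdP : ∀ k i j : Fin n, DifferentiableAt ℝ (fun z => Psi g z k i j) x :=
    fun k i j => diffAt hU (contDiffOn_Psi g hU hsmooth hpos k i j) hx
  have hsum2 : ∀ (k : Fin n) (Fc : Fin n → Fin n → Eu n → ℝ),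
      (∀ i j, DifferentiableAt ℝ (Fc i j) x) →
      pd k (fun z => ∑ i, ∑ j, Fc i j z) x = ∑ i, ∑ j, pd k (Fc i j) x := by
    intro k Fc hF
    rw [pd_sum Finset.univ (fun i _ => DifferentiableAt.fun_sum fun j _ => hF i j) k]
    exact Finset.sum_congr rfl fun i _ => pd_sum Finset.univ (fun j _ => hF i j) k
  have hpdV : ∀ k, pd k (fun z => Vf g z k) x
      = (∑ i, ∑ j, (pd k (fun z => (g z)⁻¹ i j) x * Psi g x k i j
            + (g x)⁻¹ i j * pd k (fun z => Psi g z k i j) x))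
        - ∑ i, ∑ j, (pd k (fun z => (g z)⁻¹ i k) x * Psi g x j j i
            + (g x)⁻¹ i k * pd k (fun z => Psi g z j j i) x) := by
    intro k
    have d1 : DifferentiableAt ℝ (fun z => ∑ i, ∑ j, (g z)⁻¹ i j * Psi g z k i j) x :=
      DifferentiableAt.fun_sum fun i _ => DifferentiableAt.fun_sum fun j _ => (hdG i j).fun_mul (hdP k i j)
    have d2 : DifferentiableAt ℝ (fun z => ∑ i, ∑ j, (g z)⁻¹ i k * Psi g z j j i) x :=
      DifferentiableAt.fun_sum fun i _ => DifferentiableAt.fun_sum fun j _ => (hdG i k).fun_mul (hdP j j i)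
    simp only [Vf]
    rw [pd_sub d1 d2 k, hsum2 k _ (fun i j => (hdG i j).fun_mul (hdP k i j)),
      hsum2 k _ (fun i j => (hdG i k).fun_mul (hdP j j i))]
    congr 1
    · exact Finset.sum_congr rfl fun i _ => Finset.sum_congr rfl fun j _ =>
        pd_mul (hdG i j) (hdP k i j) k
    · exact Finset.sum_congr rfl fun i _ => Finset.sum_congr rfl fun j _ =>
        pd_mul (hdG i k) (hdP j j i) k
  simp only [hpdV, Ff, Rf]
  exact key_algebra g hU hsmooth hpos (fun i j => (g x)⁻¹ i j)
    (fun k i j => pd k (fun z => (g z)⁻¹ i j) x) (fun k i j => Psi g x k i j)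
    (fun m k i j => pd m (fun z => Psi g z k i j) x)
    (fun i j => ginv_symm g hU hsmooth hpos hx i j)
    (fun k i j => Psi_symm g hU hsmooth hpos hx k i j)


lemma contDiffOn_Ff : ContDiffOn ℝ (⊤ : ℕ∞) (fun x => Ff g x) U := by
  unfold Ff
  have hG : ∀ i j : Fin n, ContDiffOn ℝ (⊤ : ℕ∞) (fun x => (g x)⁻¹ i j) U :=
    fun i j => contDiffOn_inv_entry hsmooth hpos i j
  have hP : ∀ k i j : Fin n, ContDiffOn ℝ (⊤ : ℕ∞) (fun x => Psi g x k i j) U :=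
    fun k i j => contDiffOn_Psi g hU hsmooth hpos k i j
  refine ContDiffOn.add (ContDiffOn.add (ContDiffOn.neg ?_) ?_) ?_
  · exact ContDiffOn.sum fun k _ => ContDiffOn.sum fun i _ => ContDiffOn.sum fun j _ =>
      (contDiffOn_pd hU (hG i j) k).mul (hP k i j)
  · exact ContDiffOn.sum fun k _ => ContDiffOn.sum fun i _ =>
      (contDiffOn_pd hU (hG i k) k).mul (ContDiffOn.sum fun j _ => hP j j i)
  · exact ContDiffOn.sum fun i _ => ContDiffOn.sum fun j _ => (hG i j).mul
      (ContDiffOn.sum fun k _ => ContDiffOn.sum fun l _ =>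
        ((hP k k l).mul (hP l i j)).sub ((hP k j l).mul (hP l i k)))

lemma contDiffOn_Rf : ContDiffOn ℝ (⊤ : ℕ∞) (fun x => Rf g x) U := by
  unfold Rf
  have hG : ∀ i j : Fin n, ContDiffOn ℝ (⊤ : ℕ∞) (fun x => (g x)⁻¹ i j) U :=
    fun i j => contDiffOn_inv_entry hsmooth hpos i j
  have hP : ∀ k i j : Fin n, ContDiffOn ℝ (⊤ : ℕ∞) (fun x => Psi g x k i j) U :=
    fun k i j => contDiffOn_Psi g hU hsmooth hpos k i j
  refine ContDiffOn.sum fun i _ => ContDiffOn.sum fun j _ => (hG i j).mul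
    (ContDiffOn.add (ContDiffOn.sub ?_ ?_) ?_)
  · exact ContDiffOn.sum fun k _ => contDiffOn_pd hU (hP k i j) k
  · exact ContDiffOn.sum fun k _ => contDiffOn_pd hU (hP k k j) i
  · exact ContDiffOn.sum fun k _ => ContDiffOn.sum fun l _ =>
      ((hP k k l).mul (hP l i j)).sub ((hP k i l).mul (hP l k j))

omit hU hsmooth hpos

lemma pd_zero_of_not_mem_tsupport {f : Eu n → ℝ} {x : Eu n} (h : x ∉ tsupport f)
    (i : Fin n) : pd i f x = 0 := by
  unfold pd
  rw [fderiv_of_notMem_tsupport (𝕜 := ℝ) h]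
  simp

lemma contDiff_glue {W : Set (Eu n)} {f : Eu n → ℝ} (hW : IsOpen W)
    (hf : ContDiffOn ℝ (⊤ : ℕ∞) f W) (h : ∀ x ∉ W, f =ᶠ[nhds x] 0) :
    ContDiff ℝ (⊤ : ℕ∞) f := by
  rw [contDiff_iff_contDiffAt]
  intro x
  by_cases hx : x ∈ W
  · exact hf.contDiffAt (hW.mem_nhds hx)
  · exact ContDiffAt.congr_of_eventuallyEq contDiffAt_const (h x hx)

end SC

open scoped Manifold

/-- For a smooth metric the Lee–LeFloch distributional scalar curvature pairing
coincides with integration against the classical scalar curvature. -/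
theorem stmt18 (n : ℕ) (U : Set (EuclideanSpace ℝ (Fin n))) (hU : IsOpen U)
    (g : EuclideanSpace ℝ (Fin n) → Matrix (Fin n) (Fin n) ℝ)
    (hsmooth : ∀ i j, ContDiffOn ℝ (⊤ : ℕ∞) (fun x => g x i j) U)
    (hpos : ∀ x ∈ U, (g x).PosDef)
    (u : EuclideanSpace ℝ (Fin n) → ℝ) (hu : ContDiff ℝ (⊤ : ℕ∞) u)
    (husupp : HasCompactSupport u) (husub : tsupport u ⊆ U) :
    let Ψ : EuclideanSpace ℝ (Fin n) → Fin n → Fin n → Fin n → ℝ := fun x k i j =>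
      (1/2) * ∑ l, (g x)⁻¹ k l *
        (pd i (fun z => g z j l) x + pd j (fun z => g z i l) x - pd l (fun z => g z i j) x);
    let V : EuclideanSpace ℝ (Fin n) → Fin n → ℝ := fun x k =>
      (∑ i, ∑ j, (g x)⁻¹ i j * Ψ x k i j) - ∑ i, ∑ j, (g x)⁻¹ i k * Ψ x j j i;
    let F : EuclideanSpace ℝ (Fin n) → ℝ := fun x =>
      -(∑ k, ∑ i, ∑ j, pd k (fun z => (g z)⁻¹ i j) x * Ψ x k i j)
        + (∑ k, ∑ i, pd k (fun z => (g z)⁻¹ i k) x * ∑ j, Ψ x j j i)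
        + ∑ i, ∑ j, (g x)⁻¹ i j *
            ∑ k, ∑ l, (Ψ x k k l * Ψ x l i j - Ψ x k j l * Ψ x l i k);
    let R : EuclideanSpace ℝ (Fin n) → ℝ := fun x =>
      ∑ i, ∑ j, (g x)⁻¹ i j *
        ((∑ k, pd k (fun z => Ψ z k i j) x) - (∑ k, pd i (fun z => Ψ z k k j) x)
          + ∑ k, ∑ l, (Ψ x k k l * Ψ x l i j - Ψ x k i l * Ψ x l k j));
    (∫ x in U,
        (-(∑ k, V x k * pd k (fun z => u z * Real.sqrt (g z).det) x)
          + F x * u x * Real.sqrt (g x).det))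
      = ∫ x in U, R x * u x * Real.sqrt (g x).det := by
  intro Ψ V F R
  have hV : V = SC.Vf g := rfl
  have hF : F = SC.Ff g := rfl
  have hR : R = SC.Rf g := rfl
  rw [hV, hF, hR]
  classical
  set φ : EuclideanSpace ℝ (Fin n) → ℝ := fun z => u z * Real.sqrt (g z).det with hφdef
  -- cutoff function
  obtain ⟨L, Lcomp, hKL, hLU⟩ := exists_compact_between husupp hU husub
  obtain ⟨χ₀, hχ0, hχ1, _⟩ := exists_contMDiffMap_zero_one_nhds_of_isClosed (n := (⊤ : ℕ∞))
      (𝓘(ℝ, EuclideanSpace ℝ (Fin n)))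
      isOpen_interior.isClosed_compl (isClosed_tsupport u)
      (Set.disjoint_left.mpr fun x hxc hxK => hxc (hKL hxK))
  set χ : EuclideanSpace ℝ (Fin n) → ℝ := ⇑χ₀ with hχdef
  have hone : ((⊤ : ℕ∞) : WithTop ℕ∞) ≠ 0 := by simp
  have hχsm : ContDiff ℝ (⊤ : ℕ∞) χ := by
    have h := contMDiff_iff_contDiff.mp χ₀.contMDiff
    exact_mod_cast h
  have htsL : tsupport χ ⊆ L := by
    have h1 : Function.support χ ⊆ interior L := by
      intro x hx
      by_contra hxL
      exact hx (hχ0.self_of_nhdsSet x hxL)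
    exact (closure_mono h1).trans (closure_minimal interior_subset Lcomp.isClosed)
  have hχ_supp : tsupport χ ⊆ U := htsL.trans hLU
  have hχcomp : HasCompactSupport χ := Lcomp.of_isClosed_subset (isClosed_tsupport χ) htsL
  have hχ1' : ∀ x ∈ tsupport u, ∀ᶠ y in nhds x, χ y = 1 :=
    fun x hx => eventually_nhdsSet_iff_forall.mp hχ1 x hx
  have hχx1 : ∀ x ∈ tsupport u, χ x = 1 := fun x hx => (hχ1' x hx).self_of_nhds
  -- φ properties
  have hφU : ContDiffOn ℝ (⊤ : ℕ∞) φ U :=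
    hu.contDiffOn.mul fun x hx =>
      ((SC.contDiffOn_det hsmooth) x hx).sqrt (hpos x hx).det_pos.ne'
  have hφ0 : ∀ x ∉ U, φ =ᶠ[nhds x] 0 := by
    intro x hx
    have hxu : x ∉ tsupport u := fun h => hx (husub h)
    filter_upwards [notMem_tsupport_iff_eventuallyEq.mp hxu] with z hz
    simp [φ, hz]
  have hφsm : ContDiff ℝ (⊤ : ℕ∞) φ := SC.contDiff_glue hU (hφU.of_le (by simp)) hφ0
  have hφcomp : HasCompactSupport φ := husupp.mul_right
  have htφ : tsupport φ ⊆ tsupport u := tsupport_mul_subset_left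
  have hpdφ0 : ∀ x, x ∉ tsupport u → ∀ k, pd k φ x = 0 := fun x hx k =>
    SC.pd_zero_of_not_mem_tsupport (fun h => hx (htφ h)) k
  have hφzero : ∀ x, x ∉ tsupport u → φ x = 0 := fun x hx => by
    simp [φ, image_eq_zero_of_notMem_tsupport hx]
  -- cutoff versions of V, F, R
  set W : Fin n → EuclideanSpace ℝ (Fin n) → ℝ := fun k x => χ x * SC.Vf g x k with hWdef
  set Fc : EuclideanSpace ℝ (Fin n) → ℝ := fun x => χ x * SC.Ff g x with hFcdef
  set Rc : EuclideanSpace ℝ (Fin n) → ℝ := fun x => χ x * SC.Rf g x with hRcdef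
  have hglue : ∀ (f : EuclideanSpace ℝ (Fin n) → ℝ), ContDiffOn ℝ (⊤ : ℕ∞) f U →
      ContDiff ℝ (⊤ : ℕ∞) (fun x => χ x * f x) := by
    intro f hf
    refine SC.contDiff_glue hU (hχsm.contDiffOn.mul (hf.of_le (by simp))) ?_
    intro x hx
    have hxχ : x ∉ tsupport χ := fun h => hx (hχ_supp h)
    filter_upwards [notMem_tsupport_iff_eventuallyEq.mp hxχ] with z hz
    simp [hz]
  have hWsm : ∀ k, ContDiff ℝ (⊤ : ℕ∞) (W k) := fun k =>
    hglue _ (SC.contDiffOn_Vf g hU hsmooth hpos k)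
  have hFcsm : ContDiff ℝ (⊤ : ℕ∞) Fc := hglue _ (SC.contDiffOn_Ff g hU hsmooth hpos)
  have hRcsm : ContDiff ℝ (⊤ : ℕ∞) Rc := hglue _ (SC.contDiffOn_Rf g hU hsmooth hpos)
  have hWcomp : ∀ k, HasCompactSupport (W k) := fun k => hχcomp.mul_right
  -- integrability
  have hpdcont : ∀ (f : EuclideanSpace ℝ (Fin n) → ℝ), ContDiff ℝ (⊤ : ℕ∞) f → ∀ k,
      Continuous (fun x => pd k f x) := fun f hf k =>
    (hf.continuous_fderiv hone).clm_apply continuous_const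
  have hI1 : ∀ k, Integrable (fun x => W k x * pd k φ x) := fun k =>
    ((hWsm k).continuous.mul (hpdcont φ hφsm k)).integrable_of_hasCompactSupport
      ((hWcomp k).mul_right)
  have hI2 : ∀ k, Integrable (fun x => pd k (W k) x * φ x) := fun k =>
    ((hpdcont _ (hWsm k) k).mul hφsm.continuous).integrable_of_hasCompactSupport
      hφcomp.mul_left
  have hI3 : Integrable (fun x => Fc x * φ x) :=
    (hFcsm.continuous.mul hφsm.continuous).integrable_of_hasCompactSupport hφcomp.mul_left
  -- step (a): replace V, F by cutoff versions on U
  have ha : (∫ x in U, (-(∑ k, SC.Vf g x k * pd k φ x) + SC.Ff g x * u x * Real.sqrt (g x).det))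
      = ∫ x in U, (-(∑ k, W k x * pd k φ x) + Fc x * φ x) := by
    refine setIntegral_congr_fun hU.measurableSet fun x hx => ?_
    by_cases hxu : x ∈ tsupport u
    · simp only [W, Fc, φ, hχx1 x hxu, one_mul]
      ring
    · have h0 : u x = 0 := image_eq_zero_of_notMem_tsupport hxu
      simp [hpdφ0 x hxu, h0, hφzero x hxu]
  -- step (b): extend to whole space
  have hb : (∫ x in U, (-(∑ k, W k x * pd k φ x) + Fc x * φ x))
      = ∫ x, (-(∑ k, W k x * pd k φ x) + Fc x * φ x) := by
    refine setIntegral_eq_integral_of_forall_compl_eq_zero fun x hx => ?_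
    have hxu : x ∉ tsupport u := fun h => hx (husub h)
    simp [hpdφ0 x hxu, hφzero x hxu]
  -- step (c): integration by parts
  have hIBP : ∀ k, ∫ x, pd k (W k) x * φ x = ∫ x, -(W k x * pd k φ x) := by
    intro k
    obtain ⟨C, hCW⟩ := ContDiff.lipschitzWith_of_hasCompactSupport (hWcomp k) (hWsm k) hone
    obtain ⟨D, hCφ⟩ := ContDiff.lipschitzWith_of_hasCompactSupport hφcomp hφsm hone
    have h := hCW.integral_lineDeriv_mul_eq (μ := volume) hCφ hφcomp
      (EuclideanSpace.single k 1)
    have e1 : ∀ x, lineDeriv ℝ (W k) x (EuclideanSpace.single k 1) = pd k (W k) x := fun x =>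
      ((hWsm k).differentiable hone x).lineDeriv_eq_fderiv
    have e2 : ∀ x, lineDeriv ℝ φ x (-(EuclideanSpace.single k 1)) = -(pd k φ x) := fun x => by
      rw [(hφsm.differentiable hone x).lineDeriv_eq_fderiv]
      simp [pd]
    simp only [e1, e2] at h
    rw [h]
    congr 1
    funext x
    ring
  have hc1 : (∫ x, -(∑ k, W k x * pd k φ x)) = ∫ x, (∑ k, pd k (W k) x * φ x) := by
    rw [integral_neg, integral_finset_sum _ (fun k _ => hI1 k),
      integral_finset_sum _ (fun k _ => hI2 k)]
    have : ∀ k : Fin n, (∫ x, pd k (W k) x * φ x) = -∫ x, W k x * pd k φ x := fun k => by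
      rw [hIBP k, integral_neg]
    simp only [this]
    rw [Finset.sum_neg_distrib]
  have hc : (∫ x, (-(∑ k, W k x * pd k φ x) + Fc x * φ x))
      = ∫ x, ((∑ k, pd k (W k) x * φ x) + Fc x * φ x) := by
    have hIneg : Integrable (fun x => -(∑ k, W k x * pd k φ x)) :=
      (integrable_finset_sum _ (fun k _ => hI1 k)).neg
    have hIsum2 : Integrable (fun x => ∑ k, pd k (W k) x * φ x) :=
      integrable_finset_sum _ (fun k _ => hI2 k)
    rw [integral_add hIneg hI3, integral_add hIsum2 hI3, hc1]
  -- step (d): pointwise identity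
  have hd : (∫ x, ((∑ k, pd k (W k) x * φ x) + Fc x * φ x)) = ∫ x, Rc x * φ x := by
    congr 1
    funext x
    by_cases hxu : x ∈ tsupport u
    · have hxU : x ∈ U := husub hxu
      have hev : ∀ k, pd k (W k) x = pd k (fun z => SC.Vf g z k) x := by
        intro k
        refine SC.pd_congr ?_ k
        filter_upwards [hχ1' x hxu] with z hz
        simp [W, hz]
      have hkey := SC.keyid g hU hsmooth hpos hxU
      simp only [Fc, Rc, hχx1 x hxu, one_mul, hev]
      calc (∑ k, pd k (fun z => SC.Vf g z k) x * φ x) + SC.Ff g x * φ x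
          = ((∑ k, pd k (fun z => SC.Vf g z k) x) + SC.Ff g x) * φ x := by
            rw [add_mul, Finset.sum_mul]
        _ = SC.Rf g x * φ x := by rw [hkey]
    · simp [hφzero x hxu]
  -- step (e): back to U
  have he1 : (∫ x, Rc x * φ x) = ∫ x in U, Rc x * φ x :=
    (setIntegral_eq_integral_of_forall_compl_eq_zero fun x hx => by
      simp [hφzero x (fun h => hx (husub h))]).symm
  have he2 : (∫ x in U, Rc x * φ x) = ∫ x in U, SC.Rf g x * u x * Real.sqrt (g x).det := by
    refine setIntegral_congr_fun hU.measurableSet fun x hx => ?_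
    by_cases hxu : x ∈ tsupport u
    · simp only [Rc, φ, hχx1 x hxu, one_mul]
      ring
    · simp [hφzero x hxu, image_eq_zero_of_notMem_tsupport hxu]
  exact ha.trans (hb.trans (hc.trans (hd.trans (he1.trans he2))))
end
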